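/- arXiv:1405.7152 — 3 statements merged into one kernel-verified Lean document; each statement's English description precedes it below -/
import Mathlib

section
/- Let g_1, …, g_n ∈ F_{q^m} be linearly independent over F_q and let k ≤ n. If f is a nonzero q-linearized polynomial over F_{q^m} of q-degree at most k − 1, then the F_q-dimension of the F_q-span of f(g_1), …, f(g_n) is at least n − k + 1. Consequently, the Gabidulin code of dimension k evaluated at g_1, …, g_n has minimum rank distance n − k + 1. -/
/-!
With `q = #F`, each monomial `X^(q^j)` evaluates as the `F`-linear map `Frob^j`, so a
`q`-linearized `f` gives an `F`-linear map `c ↦ f (∑ cᵢ gᵢ)` on `Fⁿ` whose image is the span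
of the codeword `(f gᵢ)ᵢ`. As the `gᵢ` are independent, its kernel injects into the roots of
`f`; it has at most `deg f ≤ q^(k-1)` elements, i.e. dimension at most `k - 1`, and
rank–nullity bounds the rank of the codeword below by `n - k + 1`. Differences of codewords are
codewords. The bound is attained by the subspace polynomial of `⟨g₁, …, g_{k-1}⟩`, built
recursively as `P_{a :: l} = P_l^q - P_l(a)^(q-1) P_l`: it has `q`-degree `k - 1` and vanishes
at `g₁, …, g_{k-1}`, which forces a kernel of dimension `k - 1`.
-/

open Polynomial Module

/-- `f` is a `q`-linearized polynomial: every monomial with nonzero coefficient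
has exponent a power of `q`, i.e. `f = Σ aᵢ X^(q^i)`. -/
def IsqLinearized (q : ℕ) {L : Type*} [Field L] (f : L[X]) : Prop :=
  ∀ i : ℕ, f.coeff i ≠ 0 → ∃ j : ℕ, i = q ^ j

section Linearized

variable {L : Type*} [Field L] {q : ℕ} {f f' : L[X]}

theorem isqLinearized_zero : IsqLinearized q (0 : L[X]) := by
  simp [IsqLinearized]

theorem isqLinearized_X : IsqLinearized q (X : L[X]) :=
  fun i hi => ⟨0, by simpa [coeff_X, eq_comm] using hi⟩

namespace IsqLinearized

theorem sub (hf : IsqLinearized q f) (hf' : IsqLinearized q f') : IsqLinearized q (f - f') := by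
  intro i hi
  by_cases h : f.coeff i = 0
  · exact hf' i fun h' => hi (by rw [coeff_sub, h, h', sub_self])
  · exact hf i h

theorem C_mul (hf : IsqLinearized q f) (c : L) : IsqLinearized q (C c * f) :=
  fun i hi => hf i (right_ne_zero_of_mul (by rwa [coeff_C_mul] at hi))

theorem natDegree_le_pow_pred (hf : IsqLinearized q f) (hq : 1 < q) {k : ℕ}
    (hk : f.natDegree < q ^ k) : f.natDegree ≤ q ^ (k - 1) := by
  rcases eq_or_ne f 0 with rfl | hf0
  · simp
  obtain ⟨j, hj⟩ := hf _ (leadingCoeff_ne_zero.mpr hf0)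
  rw [hj] at hk ⊢
  have hjk := (Nat.pow_lt_pow_iff_right hq).mp hk
  exact Nat.pow_le_pow_right (by omega) (by omega)

end IsqLinearized

noncomputable def annihilatingPoly (q : ℕ) : List L → L[X]
  | [] => X
  | a :: l =>
      annihilatingPoly q l ^ q - C ((annihilatingPoly q l).eval a ^ (q - 1)) * annihilatingPoly q l

theorem natDegree_annihilatingPoly (hq : 1 < q) (l : List L) :
    (annihilatingPoly q l).natDegree = q ^ l.length := by
  induction l with
  | nil => simp [annihilatingPoly]
  | cons a l ih =>
    have hpow : (annihilatingPoly q l ^ q).natDegree = q ^ (a :: l).length := by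
      rw [natDegree_pow, ih, List.length_cons, pow_succ, mul_comm]
    rw [annihilatingPoly, natDegree_sub_eq_left_of_natDegree_lt, hpow]
    calc _ ≤ (annihilatingPoly q l).natDegree := natDegree_C_mul_le _ _
      _ < _ := by rw [hpow, ih]; exact Nat.pow_lt_pow_right hq (Nat.lt_succ_self _)

theorem annihilatingPoly_ne_zero (hq : 1 < q) (l : List L) : annihilatingPoly q l ≠ 0 := by
  intro h
  have := natDegree_annihilatingPoly hq l
  rw [h, natDegree_zero] at this
  exact (pow_pos (by omega) _).ne this

theorem eval_annihilatingPoly_of_mem (hq : q ≠ 0) {a : L} {l : List L} (ha : a ∈ l) :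
    (annihilatingPoly q l).eval a = 0 := by
  induction l with
  | nil => simp at ha
  | cons b l ih =>
    simp only [annihilatingPoly, eval_sub, eval_pow, eval_mul, eval_C]
    rcases List.mem_cons.1 ha with rfl | ha
    · rw [← pow_succ, Nat.sub_add_cancel (Nat.one_le_iff_ne_zero.2 hq), sub_self]
    · rw [ih ha, zero_pow hq, mul_zero, sub_zero]

end Linearized

section FiniteField

variable (F : Type*) [Field F] [Fintype F]

theorem FiniteField.frobeniusAlgHom_pow_apply {R : Type*} [CommRing R] [Algebra F R] (j : ℕ)
    (x : R) : (frobeniusAlgHom F R ^ j) x = x ^ Fintype.card F ^ j := by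
  rw [AlgHom.coe_pow, coe_frobeniusAlgHom, pow_iterate]

theorem Polynomial.pow_card_eq_map_expand {R : Type*} [CommRing R] [Algebra F R] (f : R[X]) :
    f ^ Fintype.card F =
      (expand R (Fintype.card F) f).map (FiniteField.frobeniusAlgHom F R) := by
  have h : (FiniteField.frobeniusAlgHom F R[X] : R[X] →+* R[X]) =
      (mapRingHom (FiniteField.frobeniusAlgHom F R : R →+* R)).comp
        (expand R (Fintype.card F) : R[X] →+* R[X]) :=
    ringHom_ext (fun a => by simp) (by simp)
  exact RingHom.congr_fun h f

variable {L : Type*} [Field L] [Algebra F L] {f : L[X]}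

theorem IsqLinearized.pow_card (hf : IsqLinearized (Fintype.card F) f) :
    IsqLinearized (Fintype.card F) (f ^ Fintype.card F) := by
  intro i hi
  rw [pow_card_eq_map_expand F, coeff_map, coeff_expand Fintype.card_pos] at hi
  split_ifs at hi with hdvd
  · obtain ⟨j, hj⟩ := hf _ fun h => hi (by rw [h, map_zero])
    exact ⟨j + 1, by rw [pow_succ, ← hj, Nat.div_mul_cancel hdvd]⟩
  · simp at hi

theorem isqLinearized_annihilatingPoly (l : List L) :
    IsqLinearized (Fintype.card F) (annihilatingPoly (Fintype.card F) l) := by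
  induction l with
  | nil => exact isqLinearized_X
  | cons a l ih => exact (ih.pow_card F).sub (ih.C_mul _)

def IsqLinearized.evalₗ (hf : IsqLinearized (Fintype.card F) f) : L →ₗ[F] L where
  toFun x := f.eval x
  map_add' x y := by
    simp only [eval_eq_sum_range, ← Finset.sum_add_distrib, ← mul_add]
    refine Finset.sum_congr rfl fun i _ => ?_
    by_cases hc : f.coeff i = 0
    · simp [hc]
    · obtain ⟨j, rfl⟩ := hf i hc
      simp only [← FiniteField.frobeniusAlgHom_pow_apply F, map_add]
  map_smul' c x := by
    simp only [eval_eq_sum_range, Finset.smul_sum, RingHom.id_apply]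
    refine Finset.sum_congr rfl fun i _ => ?_
    by_cases hc : f.coeff i = 0
    · simp [hc]
    · obtain ⟨j, rfl⟩ := hf i hc
      simp only [← FiniteField.frobeniusAlgHom_pow_apply F, map_smul, mul_smul_comm]

variable {F} {ι : Type*} [Fintype ι]

def IsqLinearized.codewordMap (hf : IsqLinearized (Fintype.card F) f) (g : ι → L) :
    (ι → F) →ₗ[F] L :=
  (hf.evalₗ F).comp (Fintype.linearCombination F g)

theorem IsqLinearized.codewordMap_apply (hf : IsqLinearized (Fintype.card F) f) (g : ι → L)
    (c : ι → F) : hf.codewordMap g c = f.eval (∑ i, c i • g i) :=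
  rfl

theorem IsqLinearized.range_codewordMap (hf : IsqLinearized (Fintype.card F) f) (g : ι → L) :
    LinearMap.range (hf.codewordMap g) = Submodule.span F (Set.range fun i => f.eval (g i)) := by
  rw [IsqLinearized.codewordMap, LinearMap.range_comp, Fintype.range_linearCombination,
    Submodule.map_span, ← Set.range_comp]
  rfl

theorem finrank_span_eval_add_finrank_ker (hf : IsqLinearized (Fintype.card F) f) (g : ι → L) :
    finrank F (Submodule.span F (Set.range fun i => f.eval (g i))) +
      finrank F (LinearMap.ker (hf.codewordMap g)) = Fintype.card ι := by
  rw [← hf.range_codewordMap, LinearMap.finrank_range_add_finrank_ker,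
    finrank_fintype_fun_eq_card]

theorem card_pow_finrank_ker_le (hf : IsqLinearized (Fintype.card F) f) {g : ι → L}
    (hg : LinearIndependent F g) (hf0 : f ≠ 0) :
    Fintype.card F ^ finrank F (LinearMap.ker (hf.codewordMap g)) ≤ f.natDegree := by
  classical
  set ψ := hf.codewordMap g
  have hroot (c : LinearMap.ker ψ) : Fintype.linearCombination F g c ∈ f.roots.toFinset := by
    rw [Multiset.mem_toFinset, mem_roots hf0]
    exact c.2
  calc Fintype.card F ^ finrank F (LinearMap.ker ψ)
      = Nat.card (LinearMap.ker ψ) := by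
        rw [Module.natCard_eq_pow_finrank (K := F), Nat.card_eq_fintype_card]
    _ ≤ Nat.card f.roots.toFinset :=
        Nat.card_le_card_of_injective (fun c => ⟨_, hroot c⟩) fun c c' h =>
          Subtype.ext (hg.fintypeLinearCombination_injective (Subtype.ext_iff.1 h))
    _ ≤ f.natDegree := by
        rw [Nat.card_eq_finsetCard]
        exact (Multiset.toFinset_card_le _).trans (card_roots' f)

theorem card_sub_le_finrank_span_eval (hf : IsqLinearized (Fintype.card F) f) {g : ι → L}
    (hg : LinearIndependent F g) (hf0 : f ≠ 0) {d : ℕ} (hd : f.natDegree ≤ Fintype.card F ^ d) :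
    Fintype.card ι - d ≤ finrank F (Submodule.span F (Set.range fun i => f.eval (g i))) := by
  have hker := (Nat.pow_le_pow_iff_right Fintype.one_lt_card).1
    ((card_pow_finrank_ker_le hf hg hf0).trans hd)
  have := finrank_span_eval_add_finrank_ker hf g
  omega

theorem finrank_span_eval_le_card_sub (hf : IsqLinearized (Fintype.card F) f) (g : ι → L)
    {d : ℕ} (e : Fin d ↪ ι) (he : ∀ i, f.eval (g (e i)) = 0) :
    finrank F (Submodule.span F (Set.range fun i => f.eval (g i))) ≤ Fintype.card ι - d := by
  classical
  have hind : LinearIndependent F fun i => (Pi.single (e i) 1 : ι → F) :=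
    (Pi.basisFun F ι).linearIndependent.comp e e.injective
  have hker : d ≤ finrank F (LinearMap.ker (hf.codewordMap g)) :=
    calc d = finrank F (Submodule.span F (Set.range fun i => (Pi.single (e i) 1 : ι → F))) := by
          rw [finrank_span_eq_card hind, Fintype.card_fin]
      _ ≤ _ := by
          refine Submodule.finrank_mono (Submodule.span_le.2 ?_)
          rintro _ ⟨i, rfl⟩
          simp [IsqLinearized.codewordMap_apply, he]
  have := finrank_span_eval_add_finrank_ker hf g
  omega

theorem exists_isqLinearized_finrank_span_eval_eq {n d : ℕ} (hdn : d ≤ n) {g : Fin n → L}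
    (hg : LinearIndependent F g) :
    ∃ P : L[X], IsqLinearized (Fintype.card F) P ∧ P.natDegree = Fintype.card F ^ d ∧
      finrank F (Submodule.span F (Set.range fun i => P.eval (g i))) = n - d := by
  have hq : 1 < Fintype.card F := Fintype.one_lt_card
  set P := annihilatingPoly (Fintype.card F) (List.ofFn (g ∘ Fin.castLE hdn))
  have hP : IsqLinearized (Fintype.card F) P := isqLinearized_annihilatingPoly F _
  have hdeg : P.natDegree = Fintype.card F ^ d := by
    rw [natDegree_annihilatingPoly hq, List.length_ofFn]
  have hvanish (i : Fin d) : P.eval (g (Fin.castLEEmb hdn i)) = 0 :=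
    eval_annihilatingPoly_of_mem Fintype.card_ne_zero (List.mem_ofFn.2 ⟨i, rfl⟩)
  refine ⟨P, hP, hdeg, ?_⟩
  simpa only [Fintype.card_fin] using le_antisymm (finrank_span_eval_le_card_sub hP g _ hvanish)
    (card_sub_le_finrank_span_eval hP hg (annihilatingPoly_ne_zero hq _) hdeg.le)

end FiniteField

theorem gabidulin_minimum_rank_distance_general
    (q : ℕ)
    (F L : Type*) [Field F] [Field L] [Fintype F] [Algebra F L]
    (hcardF : Fintype.card F = q)
    (n k : ℕ) (hk : 0 < k) (hkn : k ≤ n)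
    (g : Fin n → L) (hg : LinearIndependent F g)
    (f : L[X]) (hf : IsqLinearized q f) (hf0 : f ≠ 0)
    (hfd : f.natDegree ≤ q ^ (k - 1)) :
    n - k + 1 ≤
      Module.finrank F (Submodule.span F (Set.range fun i => f.eval (g i))) ∧
    ((∀ f₁ f₂ : L[X], IsqLinearized q f₁ → IsqLinearized q f₂ →
        f₁.natDegree < q ^ k → f₂.natDegree < q ^ k →
        (∃ i, f₁.eval (g i) ≠ f₂.eval (g i)) →
        n - k + 1 ≤ Module.finrank F
          (Submodule.span F (Set.range fun i => f₁.eval (g i) - f₂.eval (g i)))) ∧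
      ∃ f₁ f₂ : L[X], IsqLinearized q f₁ ∧ IsqLinearized q f₂ ∧
        f₁.natDegree < q ^ k ∧ f₂.natDegree < q ^ k ∧
        (∃ i, f₁.eval (g i) ≠ f₂.eval (g i)) ∧
        Module.finrank F
          (Submodule.span F (Set.range fun i => f₁.eval (g i) - f₂.eval (g i)))
          = n - k + 1) := by
  subst hcardF
  have hq : 1 < Fintype.card F := Fintype.one_lt_card
  have hnk : n - k + 1 = Fintype.card (Fin n) - (k - 1) := by rw [Fintype.card_fin]; omega
  refine ⟨hnk ▸ card_sub_le_finrank_span_eval hf hg hf0 hfd, ?_, ?_⟩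
  · rintro f₁ f₂ h₁ h₂ hd₁ hd₂ ⟨i, hi⟩
    have hsub := h₁.sub h₂
    rw [show (fun i => f₁.eval (g i) - f₂.eval (g i)) = fun i => (f₁ - f₂).eval (g i) by
      simp only [eval_sub]]
    exact hnk ▸ card_sub_le_finrank_span_eval hsub hg (sub_ne_zero.2 fun h => hi (by rw [h]))
      (hsub.natDegree_le_pow_pred hq ((natDegree_sub_le _ _).trans_lt (max_lt hd₁ hd₂)))
  · obtain ⟨P, hP, hdeg, hrank⟩ :=
      exists_isqLinearized_finrank_span_eval_eq (by omega : k - 1 ≤ n) hg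
    have hcode : (fun i => P.eval (g i) - (0 : L[X]).eval (g i)) = fun i => P.eval (g i) := by
      simp only [eval_zero, sub_zero]
    refine ⟨P, 0, hP, isqLinearized_zero, ?_, ?_, ?_, ?_⟩
    · exact hdeg.trans_lt (Nat.pow_lt_pow_right hq (by omega))
    · rw [natDegree_zero]
      positivity
    · by_contra! h
      have := finrank_span_eval_le_card_sub hP g (Function.Embedding.refl _) (by simpa using h)
      simp only [Fintype.card_fin, Nat.sub_self] at this
      omega
    · rw [hcode, hrank]
      omega

/-- If `f` is a nonzero `q`-linearized polynomial of `q`-degree at most `k - 1` and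
`g₁, …, gₙ` are linearly independent over `F_q`, then the span of `f(g₁), …, f(gₙ)`
has `F_q`-dimension at least `n - k + 1`.  Consequently the Gabidulin code of dimension
`k` with evaluation points `g₁, …, gₙ` has minimum rank distance `n - k + 1`. -/
theorem gabidulin_minimum_rank_distance
    (q m : ℕ) (hq : IsPrimePow q) (hm : 0 < m)
    (F L : Type*) [Field F] [Field L] [Fintype F] [Fintype L] [Algebra F L]
    (hcardF : Fintype.card F = q) (hcardL : Fintype.card L = q ^ m)
    (n k : ℕ) (hk : 0 < k) (hkn : k ≤ n)
    (g : Fin n → L) (hg : LinearIndependent F g)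
    (f : L[X]) (hf : IsqLinearized q f) (hf0 : f ≠ 0)
    (hfd : f.natDegree ≤ q ^ (k - 1)) :
    n - k + 1 ≤
      Module.finrank F (Submodule.span F (Set.range fun i => f.eval (g i))) ∧
    ((∀ f₁ f₂ : L[X], IsqLinearized q f₁ → IsqLinearized q f₂ →
        f₁.natDegree < q ^ k → f₂.natDegree < q ^ k →
        (∃ i, f₁.eval (g i) ≠ f₂.eval (g i)) →
        n - k + 1 ≤ Module.finrank F
          (Submodule.span F (Set.range fun i => f₁.eval (g i) - f₂.eval (g i)))) ∧
      ∃ f₁ f₂ : L[X], IsqLinearized q f₁ ∧ IsqLinearized q f₂ ∧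
        f₁.natDegree < q ^ k ∧ f₂.natDegree < q ^ k ∧
        (∃ i, f₁.eval (g i) ≠ f₂.eval (g i)) ∧
        Module.finrank F
          (Submodule.span F (Set.range fun i => f₁.eval (g i) - f₂.eval (g i)))
          = n - k + 1) :=
  gabidulin_minimum_rank_distance_general q F L hcardF n k hk hkn g hg f hf hf0 hfd
end

section
/- Let g_1, …, g_n ∈ F_{q^m} be linearly independent over F_q and r_1, …, r_n ∈ F_{q^m}. Let D be a q-linearized polynomial over F_{q^m} of q-degree t, let N be a q-linearized polynomial that is zero or of q-degree at most t + k − 1, and suppose N(g_i) = D(r_i) for all i = 1, …, n and N(X) = D(f(X)) for some q-linearized polynomial f over F_{q^m}. Then f is zero or of q-degree at most k − 1, and the F_q-dimension of the F_q-span of f(g_1) − r_1, …, f(g_n) − r_n is at most t; that is, the codeword (f(g_1), …, f(g_n)) has rank distance at most t from (r_1, …, r_n). -/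
open Polynomial

lemma qlin_eval_add (q : ℕ) {p s : ℕ} (hp : p.Prime) (hs : q = p ^ s)
    {L : Type*} [Field L] [CharP L p] {P : L[X]} (hP : IsqLinearized q P)
    (x y : L) : P.eval (x + y) = P.eval x + P.eval y := by
  haveI : Fact p.Prime := ⟨hp⟩
  rw [eval_eq_sum, eval_eq_sum, eval_eq_sum, Polynomial.sum, Polynomial.sum,
    Polynomial.sum, ← Finset.sum_add_distrib]
  apply Finset.sum_congr rfl
  intro i hi
  obtain ⟨j, rfl⟩ := hP i (mem_support_iff.mp hi)
  rw [hs, ← pow_mul, add_pow_char_pow, mul_add]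

lemma qlin_eval_zero (q : ℕ) (hq : 1 < q) {L : Type*} [Field L] {P : L[X]}
    (hP : IsqLinearized q P) : P.eval 0 = 0 := by
  rw [← coeff_zero_eq_eval_zero]
  by_contra h
  obtain ⟨j, hj⟩ := hP 0 h
  have : 0 < q ^ j := pow_pos (by omega) j
  omega

lemma qlin_eval_smul (q : ℕ) {F L : Type*} [Field F] [Field L] [Fintype F]
    [Algebra F L] (hcardF : Fintype.card F = q) {P : L[X]}
    (hP : IsqLinearized q P) (c : F) (x : L) :
    P.eval (c • x) = c • P.eval x := by
  rw [eval_eq_sum, eval_eq_sum, Polynomial.sum, Polynomial.sum, Finset.smul_sum]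
  apply Finset.sum_congr rfl
  intro i hi
  obtain ⟨j, rfl⟩ := hP i (mem_support_iff.mp hi)
  rw [Algebra.smul_def, Algebra.smul_def, mul_pow, ← map_pow, ← hcardF,
    FiniteField.pow_card_pow]
  ring

/-- If `D` has `q`-degree `t`, `N` is zero or of `q`-degree at most `t + k − 1`,
`N(gᵢ) = D(rᵢ)` for all `i`, and `N = D ∘ f` for a `q`-linearized `f`, then `f` is zero
or of `q`-degree at most `k − 1` and the codeword `(f(g₁), …, f(gₙ))` has rank distance
at most `t` from `(r₁, …, rₙ)`. -/
theorem interpolating_pair_gives_close_codeword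
    (q m : ℕ) (hq : IsPrimePow q) (hm : 0 < m)
    (F L : Type*) [Field F] [Field L] [Fintype F] [Fintype L] [Algebra F L]
    (hcardF : Fintype.card F = q) (hcardL : Fintype.card L = q ^ m)
    (n k t : ℕ) (hk : 0 < k) (g r : Fin n → L) (hg : LinearIndependent F g)
    (D N f : L[X]) (hD : IsqLinearized q D) (hDdeg : D.natDegree = q ^ t)
    (hN : IsqLinearized q N) (hNdeg : N.natDegree ≤ q ^ (t + k - 1))
    (hint : ∀ i, N.eval (g i) = D.eval (r i))
    (hf : IsqLinearized q f) (hdiv : N = D.comp f) :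
    f.natDegree ≤ q ^ (k - 1) ∧
      Module.finrank F
        (Submodule.span F (Set.range fun i => f.eval (g i) - r i)) ≤ t := by
  classical
  obtain ⟨p, s, hp, hs, hpsq⟩ := hq
  have hp' : p.Prime := hp.nat_prime
  have hq1 : 1 < q := by
    have : 1 < p ^ s := Nat.one_lt_pow (by omega) hp'.one_lt
    omega
  -- characteristic
  have hchar : CharP L p := by
    obtain ⟨n', hpL, hcard'⟩ := FiniteField.card' (K := L)
    haveI : CharP L (ringChar L) := ringChar.charP L
    have hpl : ringChar L = p := by
      obtain ⟨n0, hpl', hcard0⟩ := FiniteField.card L (ringChar L)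
      have : Fintype.card L = p ^ (s * m) := by
        rw [hcardL, ← hpsq, pow_mul]
      have hdvd : p ∣ ringChar L ^ (n0 : ℕ) := by
        rw [← hcard0, this]
        exact dvd_pow_self p (by positivity)
      have := hp'.dvd_of_dvd_pow hdvd
      exact ((Nat.prime_dvd_prime_iff_eq hp' hpl').mp this).symm
    rwa [← hpl]
  haveI := hchar
  -- part 1
  have hqt : 0 < q ^ t := pow_pos (by omega) t
  have h1 : f.natDegree ≤ q ^ (k - 1) := by
    have h := hNdeg
    rw [hdiv, natDegree_comp, hDdeg] at h
    have : t + k - 1 = t + (k - 1) := by omega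
    rw [this, pow_add] at h
    exact Nat.le_of_mul_le_mul_left h hqt
  refine ⟨h1, ?_⟩
  -- the kernel of D as an F-subspace of L
  have hadd := qlin_eval_add q hp' hpsq.symm hD
  set K : Submodule F L :=
    { carrier := {x | D.eval x = 0}
      add_mem' := fun {a b} ha hb => by
        simp only [Set.mem_setOf_eq] at *
        rw [hadd, ha, hb, add_zero]
      zero_mem' := qlin_eval_zero q hq1 hD
      smul_mem' := fun c x hx => by
        simp only [Set.mem_setOf_eq] at *
        rw [qlin_eval_smul q hcardF hD, hx, smul_zero] } with hK
  have hsub : ∀ a b : L, D.eval (a - b) = D.eval a - D.eval b := by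
    intro a b
    have := hadd (a - b) b
    rw [sub_add_cancel] at this
    rw [this]; ring
  have hmem : ∀ i, f.eval (g i) - r i ∈ K := by
    intro i
    show D.eval (f.eval (g i) - r i) = 0
    rw [hsub, ← eval_comp, ← hdiv, hint i, sub_self]
  have hspan : Submodule.span F (Set.range fun i => f.eval (g i) - r i) ≤ K :=
    Submodule.span_le.mpr (Set.range_subset_iff.mpr hmem)
  -- D is nonzero
  have hD0 : D ≠ 0 := fun h => by
    rw [h, natDegree_zero] at hDdeg; omega
  -- card bound on K
  haveI : Fintype K := Fintype.ofFinite K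
  have hcardK : Fintype.card K ≤ q ^ t := by
    have hinj : Function.Injective
        (fun x : K => (⟨(x : L), by
          rw [Multiset.mem_toFinset, mem_roots hD0]
          exact x.2⟩ : {y // y ∈ D.roots.toFinset})) := by
      intro a b hab
      simp only [Subtype.mk.injEq] at hab
      exact Subtype.ext hab
    calc Fintype.card K ≤ Fintype.card {y // y ∈ D.roots.toFinset} :=
          Fintype.card_le_of_injective _ hinj
      _ = D.roots.toFinset.card := Fintype.card_coe _
      _ ≤ Multiset.card D.roots := D.roots.toFinset_card_le
      _ ≤ D.natDegree := D.card_roots'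
      _ = q ^ t := hDdeg
  have hfr : Fintype.card K = q ^ Module.finrank F K := by
    rw [← hcardF]; exact Module.card_eq_pow_finrank
  have hKt : Module.finrank F K ≤ t := by
    rw [hfr] at hcardK
    exact (Nat.pow_le_pow_iff_right hq1).mp hcardK
  exact le_trans (Submodule.finrank_mono hspan) hKt
end

section
/- Let g_1, …, g_i ∈ F_{q^m} be linearly independent over F_q and r_1, …, r_i ∈ F_{q^m}. Let P, K, N, D be q-linearized polynomials over F_{q^m} such that: (a) P(g_j) = K(r_j) and N(g_j) = D(r_j) for all j ≤ i − 1; (b) for every pair of q-linearized polynomials (f, h) with f(g_j) = h(r_j) for all j ≤ i − 1, there exist q-linearized polynomials a, b with f = a ∘ P + b ∘ N and h = a ∘ K + b ∘ D. Set Δ = N(g_i) − D(r_i) and Γ = P(g_i) − K(r_i), and assume Γ ≠ 0. Define P'(X) = P(X)^q − Γ^{q−1} P(X), K'(X) = K(X)^q − Γ^{q−1} K(X), N'(X) = Δ·P(X) − Γ·N(X), D'(X) = Δ·K(X) − Γ·D(X). Then for every pair of q-linearized polynomials (f, h) with f(g_j) = h(r_j) for all j ≤ i, there exist q-linearized polynomials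 a, b with f = a ∘ P' + b ∘ N' and h = a ∘ K' + b ∘ D'. -/
open Polynomial

section Helpers

variable {L : Type*} [Field L]

lemma isql_add {q : ℕ} {f g : L[X]} (hf : IsqLinearized q f) (hg : IsqLinearized q g) :
    IsqLinearized q (f + g) := by
  intro i hi
  rw [coeff_add] at hi
  rcases ne_or_eq (f.coeff i) 0 with h | h
  · exact hf i h
  · exact hg i (by simpa [h] using hi)

lemma isql_neg {q : ℕ} {f : L[X]} (hf : IsqLinearized q f) : IsqLinearized q (-f) := by
  intro i hi
  exact hf i (by simpa using hi)

lemma isql_sub {q : ℕ} {f g : L[X]} (hf : IsqLinearized q f) (hg : IsqLinearized q g) :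
    IsqLinearized q (f - g) := by
  rw [sub_eq_add_neg]; exact isql_add hf (isql_neg hg)

lemma isql_zero {q : ℕ} : IsqLinearized q (0 : L[X]) := by
  intro i hi; simp at hi

lemma isql_monomial {q : ℕ} (c : L) (j : ℕ) : IsqLinearized q (C c * X ^ q ^ j) := by
  intro i hi
  rw [coeff_C_mul, coeff_X_pow] at hi
  by_cases h : i = q ^ j
  · exact ⟨j, h⟩
  · simp [h] at hi

lemma comp_C_mul_X_coeff' (f : L[X]) (c : L) (i : ℕ) :
    (f.comp (C c * X)).coeff i = f.coeff i * c ^ i := by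
  induction f using Polynomial.induction_on' with
  | add u v hu hv => simp [add_comp, hu, hv, add_mul]
  | monomial e a =>
      have h1 : (monomial e a : L[X]).comp (C c * X) = C (a * c ^ e) * X ^ e := by
        rw [← C_mul_X_pow_eq_monomial, mul_comp, C_comp, pow_comp, X_comp,
          mul_pow, ← C_pow, C_mul]
        ring
      rw [h1, coeff_C_mul, coeff_X_pow, coeff_monomial]
      rcases eq_or_ne i e with h | h
      · subst h; simp
      · simp [h, Ne.symm h]

lemma isql_comp_C_mul_X {q : ℕ} {f : L[X]} (hf : IsqLinearized q f) (c : L) :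
    IsqLinearized q (f.comp (C c * X)) := by
  intro i hi
  rw [comp_C_mul_X_coeff'] at hi
  exact hf i (left_ne_zero_of_mul hi)

lemma isql_comp_add {p k q : ℕ} [Fact (Nat.Prime p)] [CharP L p] (hpk : q = p ^ k)
    {f : L[X]} (hf : IsqLinearized q f) (u v : L[X]) :
    f.comp (u + v) = f.comp u + f.comp v := by
  rw [comp, comp, comp, eval₂_eq_sum, eval₂_eq_sum, eval₂_eq_sum,
    Polynomial.sum_def, Polynomial.sum_def, Polynomial.sum_def, ← Finset.sum_add_distrib]
  refine Finset.sum_congr rfl fun e he => ?_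
  obtain ⟨j, rfl⟩ := hf e (mem_support_iff.mp he)
  rw [hpk, ← pow_mul, add_pow_char_pow, mul_add]

lemma isql_comp_sub {p k q : ℕ} [Fact (Nat.Prime p)] [CharP L p] (hpk : q = p ^ k)
    {f : L[X]} (hf : IsqLinearized q f) (u v : L[X]) :
    f.comp (u - v) = f.comp u - f.comp v := by
  have h2 := isql_comp_add hpk hf (u - v) v
  rw [sub_add_cancel] at h2
  exact eq_sub_of_add_eq h2.symm

lemma isql_eval_add {p k q : ℕ} [Fact (Nat.Prime p)] [CharP L p] (hpk : q = p ^ k)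
    {f : L[X]} (hf : IsqLinearized q f) (u v : L) :
    f.eval (u + v) = f.eval u + f.eval v := by
  rw [eval_eq_sum, eval_eq_sum, eval_eq_sum,
    Polynomial.sum_def, Polynomial.sum_def, Polynomial.sum_def, ← Finset.sum_add_distrib]
  refine Finset.sum_congr rfl fun e he => ?_
  obtain ⟨j, rfl⟩ := hf e (mem_support_iff.mp he)
  rw [hpk, ← pow_mul, add_pow_char_pow, mul_add]

lemma isql_eval_sub {p k q : ℕ} [Fact (Nat.Prime p)] [CharP L p] (hpk : q = p ^ k)
    {f : L[X]} (hf : IsqLinearized q f) (u v : L) :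
    f.eval (u - v) = f.eval u - f.eval v := by
  have h2 := isql_eval_add hpk hf (u - v) v
  rw [sub_add_cancel] at h2
  exact eq_sub_of_add_eq h2.symm

lemma isql_div {p k q : ℕ} [Fact (Nat.Prime p)] [CharP L p] (hpk : q = p ^ k)
    (hq2 : 2 ≤ q) {Γ : L} (hΓ0 : Γ ≠ 0) :
    ∀ s : L[X], IsqLinearized q s → s.eval Γ = 0 →
      ∃ a : L[X], IsqLinearized q a ∧ s = a.comp (X ^ q - C (Γ ^ (q - 1)) * X) := by
  have hT : (X ^ q - C (Γ ^ (q - 1)) * X : L[X]).eval Γ = 0 := by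
    have : Γ ^ (q - 1) * Γ = Γ ^ q := by
      rw [← pow_succ, Nat.sub_add_cancel (by omega)]
    simp [this]
  suffices H : ∀ d : ℕ, ∀ s : L[X], s.natDegree < d → IsqLinearized q s → s.eval Γ = 0 →
      ∃ a : L[X], IsqLinearized q a ∧ s = a.comp (X ^ q - C (Γ ^ (q - 1)) * X) by
    intro s hs hev; exact H (s.natDegree + 1) s (Nat.lt_succ_self _) hs hev
  intro d
  induction d with
  | zero => intro s hd; exact absurd hd (Nat.not_lt_zero _)
  | succ d ih =>
    intro s hd hs hev
    by_cases h1 : s.natDegree ≤ 1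
    · -- s must be 0
      have h0 : s.coeff 0 = 0 := by
        by_contra hc
        obtain ⟨j, hj⟩ := hs 0 hc
        have : 0 < q ^ j := pow_pos (by omega) j
        omega
      have hrep := Polynomial.eq_X_add_C_of_natDegree_le_one h1
      rw [h0, map_zero, add_zero] at hrep
      have hev1 : s.coeff 1 * Γ = 0 := by rw [hrep] at hev; simpa using hev
      have hc1 : s.coeff 1 = 0 := by
        rcases mul_eq_zero.mp hev1 with h | h
        · exact h
        · exact absurd h hΓ0
      refine ⟨0, isql_zero, ?_⟩
      rw [zero_comp, hrep, hc1, map_zero, zero_mul]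
    · push_neg at h1
      have hs0 : s ≠ 0 := by
        intro h; rw [h, natDegree_zero] at h1; omega
      have hlc : s.coeff s.natDegree ≠ 0 := by
        rw [← leadingCoeff]; exact leadingCoeff_ne_zero.mpr hs0
      obtain ⟨j, hj⟩ := hs s.natDegree hlc
      obtain ⟨j', rfl⟩ : ∃ j', j = j' + 1 := by
        cases j with
        | zero => rw [pow_zero] at hj; omega
        | succ j' => exact ⟨j', rfl⟩
      set c := s.coeff s.natDegree with hc
      set T : L[X] := X ^ q - C (Γ ^ (q - 1)) * X with hTdef
      have hqj : q ^ j' = p ^ (k * j') := by rw [hpk, ← pow_mul]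
      have hTpow : T ^ q ^ j'
          = X ^ q ^ (j' + 1) - C (Γ ^ ((q - 1) * q ^ j')) * X ^ q ^ j' := by
        rw [hTdef, hqj, sub_pow_char_pow, ← hqj, ← pow_mul, mul_pow, ← C_pow, ← pow_mul]
        rw [← pow_succ']
      have hu : (C c * X ^ q ^ j').comp T
          = C c * X ^ q ^ (j' + 1) - C (c * Γ ^ ((q - 1) * q ^ j')) * X ^ q ^ j' := by
        rw [mul_comp, C_comp, pow_comp, X_comp, hTpow, C_mul]
        ring
      set t := s - (C c * X ^ q ^ j').comp T with ht
      have hql_t : IsqLinearized q t := by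
        rw [ht, hu]
        exact isql_sub hs (isql_sub (isql_monomial _ _) (isql_monomial _ _))
      have hev_t : t.eval Γ = 0 := by
        rw [ht, eval_sub, eval_comp, hT, hev]
        have : (0:L) ^ q ^ j' = 0 := zero_pow (by positivity)
        simp [this]
      have hdeg : t.natDegree < s.natDegree := by
        have hrw : t = (s - C s.leadingCoeff * X ^ s.natDegree)
            + C (c * Γ ^ ((q - 1) * q ^ j')) * X ^ q ^ j' := by
          rw [ht, hu, hj]
          rw [leadingCoeff, ← hc]
          ring
        have h₁ : (s - C s.leadingCoeff * X ^ s.natDegree).natDegree < s.natDegree := by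
          rw [self_sub_C_mul_X_pow]
          rcases s.eraseLead_natDegree_lt_or_eraseLead_eq_zero with h | h
          · exact h
          · rw [h, natDegree_zero]; omega
        have h₂ : (C (c * Γ ^ ((q - 1) * q ^ j')) * X ^ q ^ j' : L[X]).natDegree
            < s.natDegree := by
          refine lt_of_le_of_lt (natDegree_C_mul_X_pow_le _ _) ?_
          rw [hj]
          exact Nat.pow_lt_pow_succ (by omega)
        calc t.natDegree ≤ max (s - C s.leadingCoeff * X ^ s.natDegree).natDegree
              (C (c * Γ ^ ((q - 1) * q ^ j')) * X ^ q ^ j' : L[X]).natDegree := by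
              rw [hrw]; exact natDegree_add_le _ _
          _ < s.natDegree := max_lt h₁ h₂
      obtain ⟨a'', ha''q, ha''⟩ := ih t (by omega) hql_t hev_t
      refine ⟨a'' + C c * X ^ q ^ j', isql_add ha''q (isql_monomial _ _), ?_⟩
      rw [add_comp, ← ha'', ht]
      ring

end Helpers

/-- The update step preserves the basis property (case `Γ ≠ 0`): if every pair `(f, h)`
of `q`-linearized polynomials interpolating the first `i − 1` data points is a left
combination of the rows `(P, K)` and `(N, D)` (here the points are indexed by
`Fin (n + 1)` with `i = n + 1`), then every pair interpolating all `i` data points is a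
left combination of the updated rows `(P', K')` and `(N', D')`. -/
theorem update_step_spans_gamma_ne_zero
    (q m : ℕ) (hq : IsPrimePow q) (hm : 0 < m)
    (F L : Type*) [Field F] [Field L] [Fintype F] [Fintype L] [Algebra F L]
    (hcardF : Fintype.card F = q) (hcardL : Fintype.card L = q ^ m)
    (n : ℕ) (g r : Fin (n + 1) → L) (hg : LinearIndependent F g)
    (P Kp N D : L[X])
    (hP : IsqLinearized q P) (hKp : IsqLinearized q Kp)
    (hN : IsqLinearized q N) (hD : IsqLinearized q D)
    (hPK : ∀ j : Fin n, P.eval (g j.castSucc) = Kp.eval (r j.castSucc))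
    (hND : ∀ j : Fin n, N.eval (g j.castSucc) = D.eval (r j.castSucc))
    (hbasis : ∀ f h : L[X], IsqLinearized q f → IsqLinearized q h →
      (∀ j : Fin n, f.eval (g j.castSucc) = h.eval (r j.castSucc)) →
      ∃ a b : L[X], IsqLinearized q a ∧ IsqLinearized q b ∧
        f = a.comp P + b.comp N ∧ h = a.comp Kp + b.comp D)
    (Δ Γ : L)
    (hΔ : Δ = N.eval (g (Fin.last n)) - D.eval (r (Fin.last n)))
    (hΓ : Γ = P.eval (g (Fin.last n)) - Kp.eval (r (Fin.last n)))
    (hΓ0 : Γ ≠ 0)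
    (P' K' N' D' : L[X])
    (hP' : P' = P ^ q - C (Γ ^ (q - 1)) * P)
    (hK' : K' = Kp ^ q - C (Γ ^ (q - 1)) * Kp)
    (hN' : N' = C Δ * P - C Γ * N)
    (hD' : D' = C Δ * Kp - C Γ * D) :
    ∀ f h : L[X], IsqLinearized q f → IsqLinearized q h →
      (∀ j : Fin (n + 1), f.eval (g j) = h.eval (r j)) →
      ∃ a b : L[X], IsqLinearized q a ∧ IsqLinearized q b ∧
        f = a.comp P' + b.comp N' ∧ h = a.comp K' + b.comp D' := by
  -- set up the characteristic
  obtain ⟨p, k, hpp, hk, hpkq⟩ := hq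
  have hpp' : p.Prime := Nat.prime_iff.mpr hpp
  haveI : Fact p.Prime := ⟨hpp'⟩
  have hpk : q = p ^ k := hpkq.symm
  have hq2 : 2 ≤ q := by
    rw [hpk]
    calc 2 ≤ p := hpp'.two_le
      _ = p ^ 1 := (pow_one p).symm
      _ ≤ p ^ k := Nat.pow_le_pow_right hpp'.one_lt.le (by omega)
  obtain ⟨n', hn'prime, hn'card⟩ := FiniteField.card L (ringChar L)
  have hppr : ringChar L = p := by
    have h1 : ringChar L ∣ p ^ (k * m) := by
      rw [pow_mul, ← hpk, ← hcardL, hn'card]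
      exact dvd_pow_self _ n'.pos.ne'
    exact (Nat.prime_dvd_prime_iff_eq hn'prime hpp').mp (hn'prime.dvd_of_dvd_pow h1)
  haveI : CharP L p := hppr ▸ ringChar.charP L
  -- main argument
  intro f h hf hh hint
  obtain ⟨a, b, hqa, hqb, hfa, hhb⟩ :=
    hbasis f h hf hh (fun j => hint j.castSucc)
  -- key relation at the last point
  have hkey : a.eval Γ + b.eval Δ = 0 := by
    have hlast := hint (Fin.last n)
    rw [hfa, hhb] at hlast
    simp only [eval_add, eval_comp] at hlast
    rw [hΓ, hΔ, isql_eval_sub hpk hqa, isql_eval_sub hpk hqb]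
    linear_combination hlast
  set T : L[X] := X ^ q - C (Γ ^ (q - 1)) * X with hTdef
  set s : L[X] := a + b.comp (C (Δ * Γ⁻¹) * X) with hsdef
  have hqs : IsqLinearized q s := isql_add hqa (isql_comp_C_mul_X hqb _)
  have hsev : s.eval Γ = 0 := by
    rw [hsdef, eval_add, eval_comp]
    have : (C (Δ * Γ⁻¹) * X : L[X]).eval Γ = Δ := by
      simp; field_simp
    rw [this, hkey]
  obtain ⟨a', hqa', ha'⟩ := isql_div hpk hq2 hΓ0 s hqs hsev
  set b' : L[X] := -(b.comp (C Γ⁻¹ * X)) with hb'def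
  have hqb' : IsqLinearized q b' := isql_neg (isql_comp_C_mul_X hqb _)
  -- generic computation for each column
  have hcol : ∀ U V : L[X],
      a'.comp (U ^ q - C (Γ ^ (q - 1)) * U) + b'.comp (C Δ * U - C Γ * V)
        = a.comp U + b.comp V := by
    intro U V
    have hTU : (U ^ q - C (Γ ^ (q - 1)) * U) = T.comp U := by
      rw [hTdef]
      simp [sub_comp, pow_comp, mul_comp]
    have e1 : a'.comp (U ^ q - C (Γ ^ (q - 1)) * U) = s.comp U := by
      rw [hTU, ← comp_assoc, ← ha']
    have e2 : (b.comp (C Γ⁻¹ * X)).comp (C Δ * U) = (b.comp (C (Δ * Γ⁻¹) * X)).comp U := by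
      rw [comp_assoc, comp_assoc]
      congr 1
      simp [mul_comp]
      ring
    have e3 : (b.comp (C Γ⁻¹ * X)).comp (C Γ * V) = b.comp V := by
      rw [comp_assoc]
      congr 1
      simp only [mul_comp, C_comp, X_comp]
      rw [← mul_assoc, ← C_mul, inv_mul_cancel₀ hΓ0, map_one, one_mul]
    have e4 : b'.comp (C Δ * U - C Γ * V)
        = -((b.comp (C Γ⁻¹ * X)).comp (C Δ * U) - (b.comp (C Γ⁻¹ * X)).comp (C Γ * V)) := by
      rw [hb'def, neg_comp, isql_comp_sub hpk (isql_comp_C_mul_X hqb _)]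
    rw [e1, e4, e2, e3, hsdef, add_comp]
    ring
  refine ⟨a', b', hqa', hqb', ?_, ?_⟩
  · rw [hfa, hP', hN', hcol P N]
  · rw [hhb, hK', hD', hcol Kp D]
end
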